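/- Let P be a preference profile with semi-River diagram sRV(P). For an alternative y ∈ A and any two incoming edges e = (x,y) and e' = (z,y) of y in sRV(P), if m_P(e) < m_P(e'), then there is a path from y to z in sRV(P) all of whose edges have margin at least m_P(e') (equivalently, a path from y to z of strength at least m_P(e')). -/

import Mathlib

attribute [local instance] Classical.propDecidable

/-- A preference profile: each of `m` voters has a strict linear (total) preference
relation over the alternatives `A`. -/
structure Profile (A : Type*) (m : ℕ) where
  pref : Fin m → A → A → Prop
  strict : ∀ i, IsStrictTotalOrder A (pref i)

/-- The majority margin of `x` over `y`: the number of voters preferring `x` to `y`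
minus the number of voters preferring `y` to `x`. -/
noncomputable def margin {A : Type*} [Fintype A] {m : ℕ} (P : Profile A m) (x y : A) : ℤ :=
  ((Finset.univ.filter fun i => P.pref i x y).card : ℤ) -
    ((Finset.univ.filter fun i => P.pref i y x).card : ℤ)

/-- The majority margin as a function on (potential) edges. -/
noncomputable def marginE {A : Type*} [Fintype A] {m : ℕ} (P : Profile A m) : A × A → ℤ :=
  fun e => margin P e.1 e.2

/-- The edge set of the margin graph: an edge `(x, y)` between distinct alternatives
whenever the majority margin of `x` over `y` is nonnegative. -/
noncomputable def marginEdges {A : Type*} [Fintype A] {m : ℕ} (P : Profile A m) :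
    Finset (A × A) :=
  Finset.univ.filter fun e => e.1 ≠ e.2 ∧ 0 ≤ margin P e.1 e.2

/-- `l` is a path from `x` to `y` in the digraph with edge set `E`:
a nonempty list of pairwise distinct vertices starting at `x`, ending at `y`,
whose consecutive vertices are joined by edges of `E`. -/
def IsPathFrom {V : Type*} (E : Finset (V × V)) (l : List V) (x y : V) : Prop :=
  l ≠ [] ∧ l.Nodup ∧ l.head? = some x ∧ l.getLast? = some y ∧
    l.Chain' fun a b => (a, b) ∈ E

/-- There is a path from `x` to `y` in the digraph with edge set `E`. -/
def Reach {V : Type*} (E : Finset (V × V)) (x y : V) : Prop :=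
  ∃ l, IsPathFrom E l x y

/-- The digraph with edge set `E` contains a directed cycle. -/
def HasCycle {V : Type*} (E : Finset (V × V)) : Prop :=
  ∃ f ∈ E, Reach E f.2 f.1

/-- `T` is a tree rooted at `r`: there is a unique path from `r` to every vertex,
no edge enters the root, and every vertex has at most one incoming edge. -/
def IsRootedTree {V : Type*} (T : Finset (V × V)) (r : V) : Prop :=
  (∀ v : V, ∃! l : List V, IsPathFrom T l r v) ∧ (∀ e ∈ T, e.2 ≠ r) ∧
    ∀ e f, e ∈ T → f ∈ T → e.2 = f.2 → e = f

/-- `a` has no incoming edge in `D`. -/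
def noIncoming {V : Type*} (D : Finset (V × V)) (a : V) : Prop :=
  ∀ e ∈ D, e.2 ≠ a

/-- `o` is a descending linear ordering of the edge set `E` with respect to the
margin function `marg`: an enumeration of `E` without repetition in which edges of
larger margin come before edges of smaller margin. -/
def IsDescOrdering {V : Type*} (marg : V × V → ℤ) (E : Finset (V × V))
    (o : List (V × V)) : Prop :=
  o.Nodup ∧ (∀ e, e ∈ o ↔ e ∈ E) ∧ o.Pairwise fun e f => marg f ≤ marg e

/-- One step of the River procedure: add `e = (x, y)` to the current diagram `D` unless
(R1) `y` already has an incoming edge in `D`, or (R2) there is a path from `y` to `x`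
in `D`. -/
noncomputable def riverStep {V : Type*} (D : Finset (V × V)) (e : V × V) :
    Finset (V × V) :=
  if (∃ f ∈ D, f.2 = e.2) ∨ Reach D e.2 e.1 then D else insert e D

/-- The River diagram obtained by processing the edges in the order `o`,
starting from the empty diagram. -/
noncomputable def riverFold {V : Type*} (o : List (V × V)) : Finset (V × V) :=
  o.foldl riverStep ∅

/-- One step of the semi-River process with margin function `marg`: add `e = (x, y)` to
the current diagram `D` unless
(sR1) there is another incoming edge `e' = (z, y)` of `y` among the included edges of
margin strictly greater than `marg e` such that there is no path from `y` to `z` among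
the included edges of margin at least `marg e'`, or
(sR2) within the included edges of strictly greater margin, the set of vertices having
a path to `x` avoiding all incoming edges of `y` induces an acyclic subgraph in which
`y` is the only vertex with no incoming edge. -/
noncomputable def semiRiverStep {V : Type*} (marg : V × V → ℤ) (D : Finset (V × V))
    (e : V × V) : Finset (V × V) :=
  let Sgt := D.filter fun f => marg e < marg f
  let sR1 : Prop := ∃ f ∈ Sgt, f.2 = e.2 ∧
      ¬ Reach (D.filter fun g => marg f ≤ marg g) e.2 f.1
  let Anc : Set V := {v | Reach (Sgt.filter fun g => g.2 ≠ e.2) v e.1}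
  let ind := Sgt.filter fun g => g.1 ∈ Anc ∧ g.2 ∈ Anc
  let sR2 : Prop := e.2 ∈ Anc ∧ ¬ HasCycle ind ∧
      ∀ v ∈ Anc, ((∀ g ∈ ind, g.2 ≠ v) ↔ v = e.2)
  if sR1 ∨ sR2 then D else insert e D

/-- The semi-River diagram obtained by processing the edges in the order `o`,
starting from the empty diagram. -/
noncomputable def semiRiverFold {V : Type*} (marg : V × V → ℤ) (o : List (V × V)) :
    Finset (V × V) :=
  o.foldl (semiRiverStep marg) ∅

/-- The runs of the directed Prim algorithm on the digraph with edge set `E`, weight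
function `w`, and start vertex `s`: `PrimRun E w s S T` holds if after some number of
steps the set of explored vertices is `S` and the collected tree edges are `T`; at each
step an arbitrary crossing edge of maximum weight is selected. -/
inductive PrimRun {V : Type*} {β : Type*} [LinearOrder β] (E : Finset (V × V))
    (w : V × V → β) (s : V) : Finset V → Finset (V × V) → Prop
  | init : PrimRun E w s {s} ∅
  | step {S : Finset V} {T : Finset (V × V)} (e : V × V) (he : e ∈ E)
      (h1 : e.1 ∈ S) (h2 : e.2 ∉ S)
      (hmax : ∀ f ∈ E, f.1 ∈ S → f.2 ∉ S → w f ≤ w e)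
      (hrun : PrimRun E w s S T) :
      PrimRun E w s (insert e.2 S) (insert e T)

/-- `T` is a possible output of the directed Prim algorithm on `(E, w)` started at `s`:
it is obtained by a run that has terminated, i.e. no crossing edge remains. -/
def IsPrimOutput {V : Type*} {β : Type*} [LinearOrder β] (E : Finset (V × V))
    (w : V × V → β) (s : V) (T : Finset (V × V)) : Prop :=
  ∃ S : Finset V, PrimRun E w s S T ∧ ∀ f ∈ E, f.1 ∈ S → f.2 ∈ S

/-- The strength of a path (as a list of vertices): the minimum weight of its edges,
`⊤` for a trivial path with no edges. -/
noncomputable def strength {V : Type*} (w : V × V → ℕ) (l : List V) : ℕ∞ :=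
  ((l.zip l.tail).map fun p => (w p : ℕ∞)).foldr min ⊤

/-- `l` is a strongest path from `x` to `y`: it is a path from `x` to `y` and no path
from `x` to `y` has (strictly) greater strength. -/
def IsStrongestPath {V : Type*} (E : Finset (V × V)) (w : V × V → ℕ) (l : List V)
    (x y : V) : Prop :=
  IsPathFrom E l x y ∧ ∀ l', IsPathFrom E l' x y → strength w l' ≤ strength w l

/-- `o` is a descending linear ordering of `E` in which, among edges of equal margin,
edges belonging to `E'` come before edges not belonging to `E'`. -/
def IsSetOrdering {V : Type*} (marg : V × V → ℤ) (E E' : Finset (V × V))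
    (o : List (V × V)) : Prop :=
  o.Nodup ∧ (∀ e, e ∈ o ↔ e ∈ E) ∧
    o.Pairwise fun e f => marg f ≤ marg e ∧ (marg e = marg f → f ∈ E' → e ∈ E')

section

variable {V : Type*}

theorem List.IsChain.rel_of_mem_zip_tail {R : V → V → Prop} :
    ∀ {l : List V}, l.IsChain R → ∀ p ∈ l.zip l.tail, R p.1 p.2
  | [], _, _, hp => by simp at hp
  | [_], _, _, hp => by simp at hp
  | a :: b :: l, h, p, hp => by
    rw [List.isChain_cons_cons] at h
    simp only [List.tail_cons, List.zip_cons_cons, List.mem_cons] at hp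
    rcases hp with rfl | hp
    · exact h.1
    · exact h.2.rel_of_mem_zip_tail p hp

theorem IsPathFrom.mono {E E' : Finset (V × V)} {l : List V} {a b : V}
    (hE : E ⊆ E') (h : IsPathFrom E l a b) : IsPathFrom E' l a b :=
  ⟨h.1, h.2.1, h.2.2.1, h.2.2.2.1, h.2.2.2.2.imp fun _ _ hab => hE hab⟩

theorem Reach.mono {E E' : Finset (V × V)} {a b : V} (hE : E ⊆ E')
    (h : Reach E a b) : Reach E' a b :=
  h.imp fun _ => IsPathFrom.mono hE

theorem semiRiverStep_subset_insert (marg : V × V → ℤ) (D : Finset (V × V))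
    (e : V × V) : semiRiverStep marg D e ⊆ insert e D := by
  simp only [semiRiverStep]
  split_ifs
  · exact Finset.subset_insert e D
  · exact subset_rfl

def ReachesStrongerParents (marg : V × V → ℤ) (D : Finset (V × V)) : Prop :=
  ∀ x y z, (x, y) ∈ D → (z, y) ∈ D → marg (x, y) < marg (z, y) →
    Reach (D.filter fun g => marg (z, y) ≤ marg g) y z

/-- The invariant survives a step because an edge `(x, y)` is only added when (sR1) fails,
and (sR1) failing for the stronger incoming edge `(z, y)` is exactly the required path. -/
theorem ReachesStrongerParents.semiRiverStep {marg : V × V → ℤ}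
    {D : Finset (V × V)} {e : V × V} (hD : ReachesStrongerParents marg D)
    (hge : ∀ f ∈ D, marg e ≤ marg f) :
    ReachesStrongerParents marg (semiRiverStep marg D e) := by
  simp only [_root_.semiRiverStep]
  split_ifs with hstep
  · exact hD
  obtain ⟨a, b⟩ := e
  have hsR1 : ∀ f ∈ D, marg (a, b) < marg f → f.2 = b →
      Reach (D.filter fun g => marg f ≤ marg g) b f.1 := fun f hf hlt hfb =>
    by_contra fun hn => hstep (Or.inl ⟨f, Finset.mem_filter.mpr ⟨hf, hlt⟩, hfb, hn⟩)
  intro x y z hx hz hlt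
  rcases Finset.mem_insert.mp hx with hxe | hxD <;>
    rcases Finset.mem_insert.mp hz with hze | hzD
  · rw [hxe, hze] at hlt
    exact absurd hlt (lt_irrefl _)
  · obtain ⟨rfl, rfl⟩ := Prod.mk.inj hxe
    exact (hsR1 (z, y) hzD hlt rfl).mono
      (Finset.filter_subset_filter _ (Finset.subset_insert _ _))
  · rw [hze] at hlt
    exact absurd (hge _ hxD) (not_le.mpr hlt)
  · exact (hD x y z hxD hzD hlt).mono
      (Finset.filter_subset_filter _ (Finset.subset_insert _ _))

theorem ReachesStrongerParents.foldl_semiRiverStep {marg : V × V → ℤ}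
    {l : List (V × V)} (hl : l.Pairwise fun e f => marg f ≤ marg e) {D : Finset (V × V)}
    (hge : ∀ f ∈ D, ∀ e ∈ l, marg e ≤ marg f) (hD : ReachesStrongerParents marg D) :
    ReachesStrongerParents marg (l.foldl (_root_.semiRiverStep marg) D) := by
  induction l generalizing D with
  | nil => exact hD
  | cons e l ih =>
    rw [List.pairwise_cons] at hl
    refine ih hl.2 (fun f hf e' he' => ?_)
      (hD.semiRiverStep fun f hf => hge f hf e List.mem_cons_self)
    rcases Finset.mem_insert.mp (semiRiverStep_subset_insert marg D e hf) with rfl | hfD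
    · exact hl.1 e' he'
    · exact hge f hfD e' (List.mem_cons_of_mem _ he')

theorem reachesStrongerParents_semiRiverFold (marg : V × V → ℤ)
    {o : List (V × V)} (ho : o.Pairwise fun e f => marg f ≤ marg e) :
    ReachesStrongerParents marg (semiRiverFold marg o) :=
  ReachesStrongerParents.foldl_semiRiverStep ho (by simp) (by simp [ReachesStrongerParents])

end

theorem semi_river_path_existence_general
    {A : Type*} [Fintype A] {m : ℕ}
    (P : Profile A m) (o : List (A × A))
    (ho : IsDescOrdering (marginE P) (marginEdges P) o)
    (x y z : A)
    (he : (x, y) ∈ semiRiverFold (marginE P) o)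
    (he' : (z, y) ∈ semiRiverFold (marginE P) o)
    (hlt : marginE P (x, y) < marginE P (z, y)) :
    ∃ l : List A, IsPathFrom (semiRiverFold (marginE P) o) l y z ∧
      ∀ p ∈ l.zip l.tail, marginE P (z, y) ≤ marginE P p := by
  obtain ⟨l, hl⟩ := reachesStrongerParents_semiRiverFold (marginE P) ho.2.2 x y z he he' hlt
  refine ⟨l, hl.mono (Finset.filter_subset _ _), fun p hp => ?_⟩
  exact (Finset.mem_filter.mp (hl.2.2.2.2.rel_of_mem_zip_tail p hp)).2

/-- For an alternative `y` and two incoming edges `e = (x, y)` and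
`e' = (z, y)` of `y` in the semi-River diagram `sRV(P)` (computed with any descending
linear ordering `o`), if `m_P(e) < m_P(e')` then there is a path from `y` to `z` in
`sRV(P)` all of whose edges have margin at least `m_P(e')` (equivalently, a path of
strength at least `m_P(e')`). -/
theorem semi_river_path_existence
    {A : Type*} [Fintype A] {m : ℕ} (hm : 1 ≤ m) (hA : 2 ≤ Fintype.card A)
    (P : Profile A m) (o : List (A × A))
    (ho : IsDescOrdering (marginE P) (marginEdges P) o)
    (x y z : A)
    (he : (x, y) ∈ semiRiverFold (marginE P) o)
    (he' : (z, y) ∈ semiRiverFold (marginE P) o)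
    (hlt : marginE P (x, y) < marginE P (z, y)) :
    ∃ l : List A, IsPathFrom (semiRiverFold (marginE P) o) l y z ∧
      ∀ p ∈ l.zip l.tail, marginE P (z, y) ≤ marginE P p :=
  semi_river_path_existence_general P o ho x y z he he' hlt
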